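/- Under the standing assumptions, let c be a codeword of C_{n−1}(n,q) with wt(c) ≤ W(n,q). If the stabilized partition ℍ_c^∞ of H_c has exactly two parts (i.e. |ℍ_c^∞| = 2), then c is not a minimal codeword. -/

import Mathlib

/-!
Let `A`, `B` be the two parts of `ℍ_c^∞`, so that `c = c|_A + c|_B`. Since the partition is
stable, `A` and `B` are not adjacent in `Γ`: no hole of `c` lies in the support of both
restrictions, hence `supp c|_A ⊆ supp c`. Minimality would give `c|_A = a • c`, a vanishing
combination of the hyperplanes of `H_c` with coefficients `(1 - a) c(H)` on `A` and `-a c(H)` on `B`.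
The weight bound gives `|H_c| ≤ Δ - 1 < q`, and fewer than `q` distinct hyperplanes have linearly
independent indicators: each of them contains a point outside all the others, because a vector
space over `𝔽_q` is not the union of fewer than `q` proper subspaces. So `a = 1` and `a = 0`.
-/

open Module

noncomputable section

/-- `pgTheta q m = 1 + q + … + q^m` for `m ≥ 0`, and `0` for `m < 0`. -/
def pgTheta (q : ℕ) (m : ℤ) : ℤ := ∑ i ∈ Finset.range (m + 1).toNat, (q : ℤ) ^ i

/-- `q^j`, truncated to `0` for negative exponents `j`. -/
def pgQpow (q : ℕ) (j : ℤ) : ℤ := if j < 0 then 0 else (q : ℤ) ^ j.toNat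

/-- `Δ_{i,q}` where `q = p^h`: `⌊√q / 2^(i-2)⌋` if `h > 2`, and `⌊p / 2^i⌋` if `h = 2`. -/
noncomputable def pgDelta (p h : ℕ) (i : ℤ) : ℤ :=
  if 2 < h then ⌊Real.sqrt ((p : ℝ) ^ h) / (2 : ℝ) ^ (i - 2)⌋
  else ⌊(p : ℝ) / (2 : ℝ) ^ i⌋

/-- `W(i,q) = (Δ_{i,q} - 1)·θ_{i-1}`. -/
noncomputable def pgW (p h : ℕ) (i : ℤ) : ℤ := (pgDelta p h i - 1) * pgTheta (p ^ h) (i - 1)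

/-- `U(n,i,q) = q^i − (Δ_{n,q} − 2)·⌊q^(i−1)⌋ − (i−2)·((q−1)·Δ_{n,q} + 1)·⌊q^(i−3)⌋ + θ_{i−3}`. -/
noncomputable def pgU (p h n : ℕ) (i : ℤ) : ℤ :=
  pgQpow (p ^ h) i - (pgDelta p h n - 2) * pgQpow (p ^ h) (i - 1)
    - (i - 2) * ((((p ^ h : ℕ) : ℤ) - 1) * pgDelta p h n + 1) * pgQpow (p ^ h) (i - 3)
    + pgTheta (p ^ h) (i - 3)

/-- `⌈w / θ_m⌉` as a natural number. -/
noncomputable def pgCeil (q w : ℕ) (m : ℤ) : ℕ := (⌈(w : ℚ) / ((pgTheta q m : ℤ) : ℚ)⌉).toNat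
open scoped Classical

/-- A point of `PG(n,q)`: a 1-dimensional subspace of `F^(n+1)`. -/
abbrev PGPoint (F : Type) [Field F] (n : ℕ) :=
  {P : Submodule F (Fin (n + 1) → F) // finrank F P = 1}

/-- The indicator function of a subspace `κ`, with values in `ZMod p`. -/
noncomputable def pgInd (p : ℕ) (F : Type) [Field F] (n : ℕ)
    (κ : Submodule F (Fin (n + 1) → F)) : PGPoint F n → ZMod p :=
  fun P => if P.1 ≤ κ then 1 else 0

/-- The code `C_{n-1}(n,q)`: the `ZMod p`-span of the indicator functions of all
hyperplanes (i.e. `n`-dimensional subspaces of `F^(n+1)`). -/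
noncomputable def pgCode (p : ℕ) (F : Type) [Field F] (n : ℕ) :
    Submodule (ZMod p) (PGPoint F n → ZMod p) :=
  Submodule.span (ZMod p)
    {f | ∃ H : Submodule F (Fin (n + 1) → F), finrank F H = n ∧ f = pgInd p F n H}

/-- The weight of a codeword: the number of points where it is nonzero. -/
noncomputable def pgWt (p : ℕ) (F : Type) [Field F] (n : ℕ)
    (c : PGPoint F n → ZMod p) : ℕ :=
  Set.ncard {P : PGPoint F n | c P ≠ 0}

/-- The number of points of `supp c` lying in the subspace `κ`. -/
noncomputable def pgSecant (p : ℕ) (F : Type) [Field F] (n : ℕ)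
    (c : PGPoint F n → ZMod p) (κ : Submodule F (Fin (n + 1) → F)) : ℕ :=
  Set.ncard {P : PGPoint F n | c P ≠ 0 ∧ P.1 ≤ κ}

/-- A codeword `c` is minimal if every codeword whose support is contained in the
support of `c` is a scalar multiple of `c`. -/
noncomputable def pgMinimal (p : ℕ) (F : Type) [Field F] (n : ℕ)
    (c : PGPoint F n → ZMod p) : Prop :=
  ∀ c' ∈ pgCode p F n, {P : PGPoint F n | c' P ≠ 0} ⊆ {P : PGPoint F n | c P ≠ 0} →
    ∃ α : ZMod p, c' = α • c

/-- The restriction `c restricted to 𝓗 = Σ_{H ∈ 𝓗} α(H)·f_H` of a codeword to a set of hyperplanes,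
given the coefficient function `α`. -/
noncomputable def pgRes (p : ℕ) (F : Type) [Field F] (n : ℕ)
    (α : Submodule F (Fin (n + 1) → F) → ZMod p)
    (A : Finset (Submodule F (Fin (n + 1) → F))) : PGPoint F n → ZMod p :=
  fun P => ∑ H ∈ A, α H * pgInd p F n H P

/-- The graph `Γ_ℙ` associated with a partition `ℙ` of the hyperplane set of `c`:
two distinct parts are adjacent iff some hole of `c` is in the support of the
restrictions of `c` to both parts and of no other part. -/
noncomputable def pgGraph (p : ℕ) (F : Type) [Field F] (n : ℕ)
    (c : PGPoint F n → ZMod p)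
    (α : Submodule F (Fin (n + 1) → F) → ZMod p)
    (P : Finset (Finset (Submodule F (Fin (n + 1) → F)))) :
    SimpleGraph (Finset (Submodule F (Fin (n + 1) → F))) where
  Adj A B := A ∈ P ∧ B ∈ P ∧ A ≠ B ∧ ∃ Q : PGPoint F n,
    c Q = 0 ∧ pgRes p F n α A Q ≠ 0 ∧ pgRes p F n α B Q ≠ 0 ∧
    ∀ C ∈ P, C ≠ A → C ≠ B → pgRes p F n α C Q = 0
  symm := by
    constructor
    rintro A B ⟨hA, hB, hne, Q, h0, h1, h2, h3⟩
    exact ⟨hB, hA, hne.symm, Q, h0, h2, h1, fun C hC hCB hCA => h3 C hC hCA hCB⟩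
  loopless := by
    constructor
    rintro A ⟨-, -, hne, -⟩
    exact hne rfl

/-- One coarsening step: replace a partition by the partition whose parts are the
unions of the parts lying in a common connected component of `Γ_ℙ`. -/
noncomputable def pgNext (p : ℕ) (F : Type) [Field F] (n : ℕ)
    (c : PGPoint F n → ZMod p)
    (α : Submodule F (Fin (n + 1) → F) → ZMod p)
    (P : Finset (Finset (Submodule F (Fin (n + 1) → F)))) :
    Finset (Finset (Submodule F (Fin (n + 1) → F))) :=
  P.image (fun A => (P.filter (fun B => (pgGraph p F n c α P).Reachable A B)).sup id)

/-- The sequence of partitions `ℙ^0, ℙ^1, ℙ^2, …`, starting from the partition of the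
hyperplane set `S` into singletons; it stabilizes at the partition `ℍ_c^∞`. -/
noncomputable def pgSeq (p : ℕ) (F : Type) [Field F] (n : ℕ)
    (c : PGPoint F n → ZMod p)
    (α : Submodule F (Fin (n + 1) → F) → ZMod p)
    (S : Finset (Submodule F (Fin (n + 1) → F))) :
    ℕ → Finset (Finset (Submodule F (Fin (n + 1) → F)))
  | 0 => S.image (fun H => {H})
  | (i + 1) => pgNext p F n c α (pgSeq p F n c α S i)

/-- `P_c^∞`: the set of holes of `c` at which the restriction of `c` to some part of
the stabilized partition is nonzero. -/
noncomputable def pgPinf (p : ℕ) (F : Type) [Field F] (n : ℕ)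
    (c : PGPoint F n → ZMod p)
    (α : Submodule F (Fin (n + 1) → F) → ZMod p)
    (Hinf : Finset (Finset (Submodule F (Fin (n + 1) → F)))) : Set (PGPoint F n) :=
  {Q | c Q = 0 ∧ ∃ A ∈ Hinf, pgRes p F n α A Q ≠ 0}

theorem Submodule.exists_mem_forall_notMem_of_card_lt {K V : Type*} [Field K] [AddCommGroup V]
    [Module K V] (W : Submodule K V) (A : Finset (Submodule K V)) (hA : ∀ H ∈ A, ¬ W ≤ H)
    (hcard : A.card < ENat.card K) : ∃ x ∈ W, ∀ H ∈ A, x ∉ H := by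
  obtain ⟨y, -, hy⟩ := Set.exists_of_ssubset <|
    Submodule.iUnion_ssubset_of_forall_ne_top_of_card_lt (Finset.univ : Finset A)
      (fun H => (H.1 : Submodule K V).comap W.subtype)
      (fun H => Submodule.comap_subtype_eq_top.not.mpr (hA H.1 H.2)) (by simpa using hcard)
  exact ⟨y, y.2, fun H hH hyH => hy (Set.mem_iUnion₂.mpr ⟨⟨H, hH⟩, Finset.mem_univ _, hyH⟩)⟩

namespace Finpartition

variable {α : Type*} [DecidableEq α] {s : Finset α}

def coarsen (P : Finpartition s) {r : Finset α → Finset α → Prop} [DecidableRel r]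
    (hr : Equivalence r) : Finpartition s :=
  ofExistsUnique (P.parts.image fun A => (P.parts.filter (r A)).sup id)
    (fun _ ht => by
      obtain ⟨A, -, rfl⟩ := Finset.mem_image.mp ht
      exact Finset.sup_le fun B hB => P.le (Finset.mem_filter.mp hB).1)
    (fun a ha => by
      obtain ⟨A, hA, haA⟩ := P.exists_mem ha
      refine ⟨_, ⟨Finset.mem_image_of_mem _ hA,
        Finset.le_sup (f := id) (Finset.mem_filter.mpr ⟨hA, hr.refl A⟩) haA⟩, ?_⟩
      rintro _ ⟨ht, hat⟩
      obtain ⟨B, -, rfl⟩ := Finset.mem_image.mp ht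
      obtain ⟨C, hC, haC⟩ := Finset.mem_sup.mp hat
      obtain ⟨hCP, hBC⟩ := Finset.mem_filter.mp hC
      have hAB : r A B := by
        rw [P.eq_of_mem_parts hA hCP haA haC]
        exact hr.symm hBC
      congr 1
      exact Finset.filter_congr fun D _ => ⟨hr.trans hAB, hr.trans (hr.symm hAB)⟩)
    (fun h => by
      obtain ⟨A, hA, hAe⟩ := Finset.mem_image.mp h
      obtain ⟨a, ha⟩ := P.nonempty_of_mem_parts hA
      have := Finset.le_sup (f := id) (Finset.mem_filter.mpr ⟨hA, hr.refl A⟩) ha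
      simp [hAe] at this)

theorem coarsen_parts (P : Finpartition s) {r : Finset α → Finset α → Prop} [DecidableRel r]
    (hr : Equivalence r) :
    (P.coarsen hr).parts = P.parts.image fun A => (P.parts.filter (r A)).sup id :=
  rfl

end Finpartition

section Hyperplanes

variable {p : ℕ} {F : Type} [Field F] {n : ℕ}

theorem pgRes_mem_pgCode (α : Submodule F (Fin (n + 1) → F) → ZMod p)
    {A : Finset (Submodule F (Fin (n + 1) → F))} (hdim : ∀ H ∈ A, finrank F H = n) :
    pgRes p F n α A ∈ pgCode p F n := by
  have hres : pgRes p F n α A = ∑ H ∈ A, α H • pgInd p F n H := by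
    funext P
    simp [pgRes, Finset.sum_apply, smul_eq_mul]
  rw [hres]
  exact Submodule.sum_mem _ fun H hH => Submodule.smul_mem _ _
    (Submodule.subset_span ⟨H, hdim H hH, rfl⟩)

theorem pgRes_union (α : Submodule F (Fin (n + 1) → F) → ZMod p)
    {A B : Finset (Submodule F (Fin (n + 1) → F))} (hAB : Disjoint A B) :
    pgRes p F n α (A ∪ B) = pgRes p F n α A + pgRes p F n α B := by
  funext Q
  exact Finset.sum_union hAB

theorem exists_pgPoint_le_forall_not_le (hn : 1 ≤ n) {A : Finset (Submodule F (Fin (n + 1) → F))}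
    (hdim : ∀ H ∈ A, finrank F H = n) (hcard : A.card < ENat.card F)
    {H₀ : Submodule F (Fin (n + 1) → F)} (hH₀ : H₀ ∈ A) :
    ∃ P : PGPoint F n, P.1 ≤ H₀ ∧ ∀ H ∈ A, H ≠ H₀ → ¬ P.1 ≤ H := by
  -- Avoiding `⊥` as well makes the vector found nonzero.
  have hAvoid : ∀ H ∈ insert ⊥ (A.erase H₀), ¬ H₀ ≤ H := by
    intro H hH hle
    rcases Finset.mem_insert.mp hH with rfl | hH
    · have := hdim H₀ hH₀
      rw [le_bot_iff.mp hle, finrank_bot] at this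
      omega
    · exact Finset.ne_of_mem_erase hH <| (Submodule.eq_of_le_of_finrank_eq hle
        (by rw [hdim H₀ hH₀, hdim H (Finset.mem_of_mem_erase hH)])).symm
  have hcard' : (insert ⊥ (A.erase H₀)).card < ENat.card F := by
    refine lt_of_le_of_lt ?_ hcard
    have := Finset.card_insert_le (⊥ : Submodule F (Fin (n + 1) → F)) (A.erase H₀)
    rw [Finset.card_erase_of_mem hH₀] at this
    exact_mod_cast this.trans (Nat.sub_add_cancel (Finset.card_pos.mpr ⟨H₀, hH₀⟩)).le
  obtain ⟨x, hxH₀, hx⟩ := Submodule.exists_mem_forall_notMem_of_card_lt H₀ _ hAvoid hcard'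
  have hx0 : x ≠ 0 := fun h0 => hx ⊥ (Finset.mem_insert_self _ _) (h0 ▸ Submodule.zero_mem _)
  refine ⟨⟨Submodule.span F {x}, finrank_span_singleton hx0⟩,
    (Submodule.span_singleton_le_iff_mem _ _).mpr hxH₀, fun H hH hne hle => ?_⟩
  exact hx H (Finset.mem_insert_of_mem (Finset.mem_erase.mpr ⟨hne, hH⟩))
    ((Submodule.span_singleton_le_iff_mem _ _).mp hle)

theorem eq_zero_of_pgRes_eq_zero (hn : 1 ≤ n) {A : Finset (Submodule F (Fin (n + 1) → F))}
    (hdim : ∀ H ∈ A, finrank F H = n) (hcard : A.card < ENat.card F)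
    {β : Submodule F (Fin (n + 1) → F) → ZMod p} (hβ : pgRes p F n β A = 0) :
    ∀ H ∈ A, β H = 0 := by
  intro H₀ hH₀
  obtain ⟨P, hPH₀, hP⟩ := exists_pgPoint_le_forall_not_le hn hdim hcard hH₀
  have hsum := congrFun hβ P
  simp only [pgRes, Pi.zero_apply] at hsum
  rwa [Finset.sum_eq_single_of_mem H₀ hH₀ fun H hH hne => by simp [pgInd, hP H hH hne],
    pgInd, if_pos hPH₀, mul_one] at hsum

theorem pgRes_ne_smul_pgRes_union [Fact p.Prime] (hn : 1 ≤ n)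
    {A B : Finset (Submodule F (Fin (n + 1) → F))} (hA : A.Nonempty) (hB : B.Nonempty)
    (hAB : Disjoint A B) (hdim : ∀ H ∈ A ∪ B, finrank F H = n)
    (hcard : (A ∪ B).card < ENat.card F) {α : Submodule F (Fin (n + 1) → F) → ZMod p}
    (hα : ∀ H ∈ A ∪ B, α H ≠ 0) (a : ZMod p) :
    pgRes p F n α A ≠ a • pgRes p F n α (A ∪ B) := by
  intro h
  -- the coefficients of `pgRes α A - a • pgRes α (A ∪ B)` as a combination over `A ∪ B`
  set β : Submodule F (Fin (n + 1) → F) → ZMod p :=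
    fun H => ((if H ∈ A then 1 else 0) - a) * α H
  have hβ : pgRes p F n β (A ∪ B) = 0 := by
    funext Q
    have hQ := congrFun h Q
    simp only [pgRes, Pi.smul_apply, smul_eq_mul] at hQ
    simp only [pgRes, β, sub_mul, one_mul, zero_mul, ite_mul, Finset.sum_sub_distrib, mul_assoc,
      ← Finset.mul_sum, Finset.sum_ite_mem, Finset.union_inter_cancel_left, Pi.zero_apply]
    rw [hQ, sub_self]
  have hcoeff := eq_zero_of_pgRes_eq_zero hn hdim hcard hβ
  obtain ⟨H, hH⟩ := hA
  obtain ⟨H', hH'⟩ := hB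
  have ha1 : 1 - a = 0 := by
    simpa [β, hH, hα H (Finset.mem_union_left _ hH)] using hcoeff H (Finset.mem_union_left _ hH)
  have ha0 : a = 0 := by
    simpa [β, Finset.disjoint_right.mp hAB hH', hα H' (Finset.mem_union_right _ hH')] using
      hcoeff H' (Finset.mem_union_right _ hH')
  simp [ha0] at ha1

end Hyperplanes

section Partition

variable {p : ℕ} {F : Type} [Field F] {n : ℕ} (c : PGPoint F n → ZMod p)
  (α : Submodule F (Fin (n + 1) → F) → ZMod p)

theorem exists_finpartition_parts_eq_pgSeq (S : Finset (Submodule F (Fin (n + 1) → F))) (j : ℕ) :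
    ∃ P : Finpartition S, P.parts = pgSeq p F n c α S j := by
  induction j with
  | zero => exact ⟨⊥, Finset.map_eq_image _ _⟩
  | succ j ih =>
    obtain ⟨P, hP⟩ := ih
    refine ⟨P.coarsen (pgGraph p F n c α P.parts).reachable_is_equivalence, ?_⟩
    rw [Finpartition.coarsen_parts, pgSeq, ← hP]
    rfl

theorem not_reachable_of_pgNext_eq {P : Finset (Finset (Submodule F (Fin (n + 1) → F)))}
    (hP : pgNext p F n c α P = P) {A B : Finset (Submodule F (Fin (n + 1) → F))}
    (hA : A ∈ P) (hB : B ∈ P) (hAB : A ≠ B) : ¬ (pgGraph p F n c α P).Reachable A B := by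
  intro hr
  have hinj : Set.InjOn (fun A => (P.filter ((pgGraph p F n c α P).Reachable A)).sup id) P :=
    Finset.card_image_iff.mp (congrArg Finset.card hP)
  refine hAB (hinj hA hB ?_)
  dsimp only
  congr 1
  exact Finset.filter_congr fun C _ => ⟨hr.symm.trans, hr.trans⟩

theorem support_pgRes_subset_of_not_adj {A B : Finset (Submodule F (Fin (n + 1) → F))}
    (hAB : A ≠ B) (hc : c = pgRes p F n α A + pgRes p F n α B)
    (hadj : ¬ (pgGraph p F n c α {A, B}).Adj A B) :
    {Q | pgRes p F n α A Q ≠ 0} ⊆ {Q | c Q ≠ 0} := by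
  intro Q hA hcQ
  refine hadj ⟨by simp, by simp, hAB, Q, hcQ, hA, fun hB => hA ?_, fun C hC hCA hCB => ?_⟩
  · simpa [hB] using (congrFun hc Q).symm.trans hcQ
  · simp [hCA, hCB] at hC

end Partition

section Parameters

theorem pgTheta_pos (q : ℕ) {m : ℤ} (hm : 0 ≤ m) : 0 < pgTheta q m :=
  Finset.sum_pos' (fun i _ => by positivity) ⟨0, Finset.mem_range.mpr (by omega), by simp⟩

theorem pgDelta_le_pow {p h n : ℕ} (hh : 1 ≤ h) (hn : 2 ≤ n) :
    pgDelta p h n ≤ ((p ^ h : ℕ) : ℤ) := by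
  have hfloor : ∀ x : ℝ, x ≤ (p : ℝ) ^ h → ⌊x⌋ ≤ ((p ^ h : ℕ) : ℤ) := fun x hx =>
    (Int.floor_le_floor (by exact_mod_cast hx)).trans_eq (Int.floor_natCast _)
  unfold pgDelta
  split_ifs <;> apply hfloor
  · have hsqrt : √((p : ℝ) ^ h) ≤ (p : ℝ) ^ h := by
      rw [Real.sqrt_le_left (by positivity)]
      exact_mod_cast Nat.le_self_pow two_ne_zero _
    refine (div_le_self (Real.sqrt_nonneg _) ?_).trans hsqrt
    rw [show (n : ℤ) - 2 = ((n - 2 : ℕ) : ℤ) by omega, zpow_natCast]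
    exact one_le_pow₀ one_le_two
  · refine (div_le_self (Nat.cast_nonneg p) (one_le_zpow₀ one_le_two (by omega))).trans ?_
    exact_mod_cast Nat.le_self_pow (by omega) p

theorem pgCeil_le {q w : ℕ} {m D : ℤ} (hθ : 0 < pgTheta q m) (hw : (w : ℤ) ≤ D * pgTheta q m) :
    (pgCeil q w m : ℤ) ≤ D := by
  have hceil : ⌈(w : ℚ) / (pgTheta q m : ℚ)⌉ ≤ D := by
    rw [Int.ceil_le, div_le_iff₀ (by exact_mod_cast hθ)]
    exact_mod_cast hw
  unfold pgCeil
  rwa [Int.toNat_of_nonneg (Int.ceil_nonneg (by positivity))]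

end Parameters

theorem statement_12_general (p h n : ℕ) (hp : p.Prime) (hh : 2 ≤ h) (hn : 2 ≤ n)
    (F : Type) [Field F] [Fintype F] (hF : Fintype.card F = p ^ h)
    (c : PGPoint F n → ZMod p)
    (hwt : (pgWt p F n c : ℤ) ≤ pgW p h n)
    (S : Finset (Submodule F (Fin (n + 1) → F)))
    (hScard : S.card = pgCeil (p ^ h) (pgWt p F n c) ((n : ℤ) - 1))
    (hShyp : ∀ H ∈ S, finrank F H = n)
    (α : Submodule F (Fin (n + 1) → F) → ZMod p)
    (hα : ∀ H ∈ S, α H ≠ 0)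
    (hrep : c = fun P => ∑ H ∈ S, α H * pgInd p F n H P)
    (j : ℕ)
    (hstab : pgSeq p F n c α S (j + 1) = pgSeq p F n c α S j)
    (htwo : (pgSeq p F n c α S j).card = 2) :
    ¬ pgMinimal p F n c := by
  intro hmin
  have : Fact p.Prime := ⟨hp⟩
  have hcS : c = pgRes p F n α S := hrep
  have hcard : S.card < ENat.card F := by
    have hle : (S.card : ℤ) ≤ pgDelta p h n - 1 :=
      hScard ▸ pgCeil_le (pgTheta_pos _ (by omega)) hwt
    have hΔ := pgDelta_le_pow (p := p) (by omega : 1 ≤ h) hn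
    rw [ENat.card_eq_coe_fintype_card, hF]
    exact_mod_cast (by omega : S.card < p ^ h)
  obtain ⟨P, hP⟩ := exists_finpartition_parts_eq_pgSeq c α S j
  obtain ⟨A, B, hAB, hparts⟩ := Finset.card_eq_two.mp (hP ▸ htwo)
  have hA : A ∈ P.parts := by simp [hparts]
  have hB : B ∈ P.parts := by simp [hparts]
  have hS : A ∪ B = S := by simpa [hparts] using P.sup_parts
  have hdisj : Disjoint A B := P.disjoint hA hB hAB
  have hc : c = pgRes p F n α A + pgRes p F n α B := by rw [← pgRes_union α hdisj, hS, hcS]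
  have hnadj : ¬ (pgGraph p F n c α {A, B}).Adj A B := fun hadj =>
    not_reachable_of_pgNext_eq c α hstab (hP ▸ hA) (hP ▸ hB) hAB
      (by rw [← hP, hparts]; exact hadj.reachable)
  obtain ⟨a, ha⟩ := hmin _
    (pgRes_mem_pgCode α fun H hH => hShyp H (hS ▸ Finset.mem_union_left _ hH))
    (support_pgRes_subset_of_not_adj c α hAB hc hnadj)
  refine pgRes_ne_smul_pgRes_union (by omega) (P.nonempty_of_mem_parts hA)
    (P.nonempty_of_mem_parts hB) hdisj (hS ▸ hShyp) (hS ▸ hcard) (hS ▸ hα) a ?_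
  rwa [hS, ← hcS]

/-- Corollary: if the stabilized partition `ℍ_c^∞` has exactly two parts, then `c`
is not a minimal codeword. -/
theorem statement_12 (p h n : ℕ) (hp : p.Prime) (hh : 2 ≤ h) (hn : 2 ≤ n)
    (hq27 : 27 < p ^ h)
    (hq1 : 2 < h → max 32 (2 ^ (2 * n - 4)) ≤ p ^ h)
    (hq2 : h = 2 → 2 ^ (2 * n) ≤ p ^ h)
    (F : Type) [Field F] [Fintype F] (hF : Fintype.card F = p ^ h)
    (c : PGPoint F n → ZMod p) (hc : c ∈ pgCode p F n)
    (hwt : (pgWt p F n c : ℤ) ≤ pgW p h n)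
    (S : Finset (Submodule F (Fin (n + 1) → F)))
    (hScard : S.card = pgCeil (p ^ h) (pgWt p F n c) ((n : ℤ) - 1))
    (hShyp : ∀ H ∈ S, finrank F H = n)
    (α : Submodule F (Fin (n + 1) → F) → ZMod p)
    (hα : ∀ H ∈ S, α H ≠ 0)
    (hrep : c = fun P => ∑ H ∈ S, α H * pgInd p F n H P)
    (j : ℕ)
    (hstab : pgSeq p F n c α S (j + 1) = pgSeq p F n c α S j)
    (htwo : (pgSeq p F n c α S j).card = 2) :
    ¬ pgMinimal p F n c :=
  statement_12_general p h n hp hh hn F hF c hwt S hScard hShyp α hα hrep j hstab htwo
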